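/- Braiding congruence is stable under renaming: if φ : P ≅ Q is a braiding congruence between processes in Proc Γ and ρ : Fin Γ → Fin Δ is a renaming, then there is a braiding congruence φ/ρ : ρ* P ≅ ρ* Q. -/
import Mathlib


/-- Contexts are natural numbers; names in context `Γ` are de Bruijn indices below `Γ`. -/
abbrev Name (Γ : ℕ) : Type := Fin Γ

/-- The renaming `push : Fin Γ → Fin (Γ+1)` sends `x` to `x+1`, freeing the index `0`. -/
def push {Γ : ℕ} (x : Name Γ) : Name (Γ + 1) := x.succ

/-- For `y : Fin Γ`, the renaming `pop y : Fin (Γ+1) → Fin Γ` sends `0` to `y` and `x+1` to `x`. -/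
def pop {Γ : ℕ} (y : Name Γ) : Name (Γ + 1) → Name Γ
  | ⟨0, _⟩ => y
  | ⟨x + 1, h⟩ => ⟨x, Nat.lt_of_succ_lt_succ h⟩

/-- The renaming `swap : Fin (Γ+2) → Fin (Γ+2)` sends `0` to `1`, `1` to `0` and `x+2` to itself. -/
def swap {Γ : ℕ} : Name (Γ + 2) → Name (Γ + 2)
  | ⟨0, _⟩ => ⟨1, by omega⟩
  | ⟨1, _⟩ => ⟨0, by omega⟩
  | ⟨x + 2, h⟩ => ⟨x + 2, h⟩

/-- The lift `suc ρ : Fin (Γ+1) → Fin (Δ+1)` of a renaming `ρ : Fin Γ → Fin Δ` sends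
`0` to `0` and `x+1` to `(ρ x)+1`. -/
def sucR {Γ Δ : ℕ} (ρ : Name Γ → Name Δ) : Name (Γ + 1) → Name (Δ + 1)
  | ⟨0, _⟩ => ⟨0, Nat.succ_pos Δ⟩
  | ⟨x + 1, h⟩ => (ρ ⟨x, Nat.lt_of_succ_lt_succ h⟩).succ

-- defeq tests
/-- Processes over the context `Γ`, in de Bruijn form. -/
inductive Proc : ℕ → Type where
  /-- The inactive process `0`. -/
  | nil : {Γ : ℕ} → Proc Γ
  /-- Input prefix `x.P` (binding one name). -/
  | input : {Γ : ℕ} → Name Γ → Proc (Γ + 1) → Proc Γ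
  /-- Output prefix `x⟨y⟩.P`. -/
  | output : {Γ : ℕ} → Name Γ → Name Γ → Proc Γ → Proc Γ
  /-- Choice `P + Q`. -/
  | choice : {Γ : ℕ} → Proc Γ → Proc Γ → Proc Γ
  /-- Parallel composition `P ∣ Q`. -/
  | par : {Γ : ℕ} → Proc Γ → Proc Γ → Proc Γ
  /-- Restriction `ν P` (binding one name). -/
  | nu : {Γ : ℕ} → Proc (Γ + 1) → Proc Γ
  /-- Replication `!P`. -/
  | rep : {Γ : ℕ} → Proc Γ → Proc Γ

/-- The functorial extension of a renaming to processes, going under the binders of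
input and restriction via the lift `sucR`. -/
def Proc.rename : {Γ Δ : ℕ} → (Name Γ → Name Δ) → Proc Γ → Proc Δ
  | _, _, _, .nil => .nil
  | _, _, ρ, .input x P => .input (ρ x) (P.rename (sucR ρ))
  | _, _, ρ, .output x y P => .output (ρ x) (ρ y) (P.rename ρ)
  | _, _, ρ, .choice P Q => .choice (P.rename ρ) (Q.rename ρ)
  | _, _, ρ, .par P Q => .par (P.rename ρ) (Q.rename ρ)
  | _, _, ρ, .nu P => .nu (P.rename (sucR ρ))
  | _, _, ρ, .rep P => .rep (P.rename ρ)
/-- Braiding congruence `P ≅ Q`: the congruence on processes generated by the braidings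
`ν ν (swap* P) ≅ ν ν P` and `ν ν P ≅ ν ν (swap* P)`, transitivity, and closure under
all process constructors. -/
inductive BC : {Γ : ℕ} → Proc Γ → Proc Γ → Type where
  /-- `ν ν (swap* P) ≅ ν ν P`. -/
  | nuSwap : {Γ : ℕ} → (P : Proc (Γ + 2)) → BC (.nu (.nu (P.rename swap))) (.nu (.nu P))
  /-- `ν ν P ≅ ν ν (swap* P)`. -/
  | nuSwapInv : {Γ : ℕ} → (P : Proc (Γ + 2)) → BC (.nu (.nu P)) (.nu (.nu (P.rename swap)))
  /-- Transitivity. -/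
  | trans : {Γ : ℕ} → {P R S : Proc Γ} → BC P R → BC R S → BC P S
  /-- `0 ≅ 0`. -/
  | nil : {Γ : ℕ} → BC (Proc.nil : Proc Γ) .nil
  /-- Compatibility with input prefix. -/
  | input : {Γ : ℕ} → (x : Name Γ) → {P R : Proc (Γ + 1)} → BC P R →
      BC (.input x P) (.input x R)
  /-- Compatibility with output prefix. -/
  | output : {Γ : ℕ} → (x y : Name Γ) → {P R : Proc Γ} → BC P R →
      BC (.output x y P) (.output x y R)
  /-- Compatibility with choice. -/
  | choice : {Γ : ℕ} → {P R Q S : Proc Γ} → BC P R → BC Q S →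
      BC (.choice P Q) (.choice R S)
  /-- Compatibility with parallel composition. -/
  | par : {Γ : ℕ} → {P R Q S : Proc Γ} → BC P R → BC Q S →
      BC (.par P Q) (.par R S)
  /-- Compatibility with restriction. -/
  | nu : {Γ : ℕ} → {P R : Proc (Γ + 1)} → BC P R → BC (.nu P) (.nu R)
  /-- Compatibility with replication. -/
  | rep : {Γ : ℕ} → {P R : Proc Γ} → BC P R → BC (.rep P) (.rep R)

theorem sucR_ext {Γ Δ : ℕ} {ρ σ : Name Γ → Name Δ} (h : ∀ x, ρ x = σ x) :
    ∀ x, sucR ρ x = sucR σ x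
  | ⟨0, _⟩ => rfl
  | ⟨x + 1, hx⟩ => by simp [sucR, h]

theorem sucR_comp {Γ Δ Θ : ℕ} (ρ : Name Γ → Name Δ) (σ : Name Δ → Name Θ) :
    ∀ x, sucR σ (sucR ρ x) = sucR (σ ∘ ρ) x
  | ⟨0, _⟩ => rfl
  | ⟨x + 1, hx⟩ => rfl

theorem Proc.rename_ext : {Γ Δ : ℕ} → {ρ σ : Name Γ → Name Δ} → (h : ∀ x, ρ x = σ x) →
    (P : Proc Γ) → P.rename ρ = P.rename σ
  | _, _, _, _, h, .nil => rfl
  | _, _, _, _, h, .input x P => by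
      simp [Proc.rename, h x, Proc.rename_ext (sucR_ext h) P]
  | _, _, _, _, h, .output x y P => by
      simp [Proc.rename, h x, h y, Proc.rename_ext h P]
  | _, _, _, _, h, .choice P Q => by
      simp [Proc.rename, Proc.rename_ext h P, Proc.rename_ext h Q]
  | _, _, _, _, h, .par P Q => by
      simp [Proc.rename, Proc.rename_ext h P, Proc.rename_ext h Q]
  | _, _, _, _, h, .nu P => by
      simp [Proc.rename, Proc.rename_ext (sucR_ext h) P]
  | _, _, _, _, h, .rep P => by simp [Proc.rename, Proc.rename_ext h P]

theorem Proc.rename_comp : {Γ Δ Θ : ℕ} → (ρ : Name Γ → Name Δ) → (σ : Name Δ → Name Θ) →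
    (P : Proc Γ) → (P.rename ρ).rename σ = P.rename (σ ∘ ρ)
  | _, _, _, _, _, .nil => rfl
  | _, _, _, ρ, σ, .input x P => by
      simp [Proc.rename, Proc.rename_comp (sucR ρ) (sucR σ) P,
        Proc.rename_ext (sucR_comp ρ σ) P]
      exact Proc.rename_ext (sucR_comp ρ σ) P
  | _, _, _, ρ, σ, .output x y P => by simp [Proc.rename, Proc.rename_comp ρ σ P]
  | _, _, _, ρ, σ, .choice P Q => by
      simp [Proc.rename, Proc.rename_comp ρ σ P, Proc.rename_comp ρ σ Q]
  | _, _, _, ρ, σ, .par P Q => by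
      simp [Proc.rename, Proc.rename_comp ρ σ P, Proc.rename_comp ρ σ Q]
  | _, _, _, ρ, σ, .nu P => by
      simp [Proc.rename, Proc.rename_comp (sucR ρ) (sucR σ) P]
      exact Proc.rename_ext (sucR_comp ρ σ) P
  | _, _, _, ρ, σ, .rep P => by simp [Proc.rename, Proc.rename_comp ρ σ P]

theorem swap_sucR {Γ Δ : ℕ} (ρ : Name Γ → Name Δ) :
    ∀ x : Name (Γ + 2), sucR (sucR ρ) (swap x) = swap (sucR (sucR ρ) x)
  | ⟨0, _⟩ => rfl
  | ⟨1, _⟩ => rfl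
  | ⟨x + 2, hx⟩ => rfl

theorem swap_rename {Γ Δ : ℕ} (ρ : Name Γ → Name Δ) (P : Proc (Γ + 2)) :
    (P.rename swap).rename (sucR (sucR ρ)) = (P.rename (sucR (sucR ρ))).rename swap := by
  rw [Proc.rename_comp, Proc.rename_comp]
  exact Proc.rename_ext (fun x => swap_sucR ρ x) P

/-- Braiding congruence is stable under renaming: if `φ : P ≅ Q` and
`ρ : Fin Γ → Fin Δ`, then there is a braiding congruence `φ/ρ : ρ* P ≅ ρ* Q`. -/
theorem BC.rename_stable {Γ Δ : ℕ} {P Q : Proc Γ} (φ : BC P Q) (ρ : Name Γ → Name Δ) :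
    Nonempty (BC (P.rename ρ) (Q.rename ρ)) := by
  induction φ generalizing Δ with
  | nuSwap P =>
      refine ⟨?_⟩
      simp only [Proc.rename, swap_rename]
      exact BC.nuSwap _
  | nuSwapInv P =>
      refine ⟨?_⟩
      simp only [Proc.rename, swap_rename]
      exact BC.nuSwapInv _
  | trans _ _ ih1 ih2 => exact ⟨((ih1 ρ).some).trans ((ih2 ρ).some)⟩
  | nil => exact ⟨.nil⟩
  | input x _ ih => exact ⟨.input (ρ x) ((ih (sucR ρ)).some)⟩
  | output x y _ ih => exact ⟨.output (ρ x) (ρ y) ((ih ρ).some)⟩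
  | choice _ _ ih1 ih2 => exact ⟨.choice ((ih1 ρ).some) ((ih2 ρ).some)⟩
  | par _ _ ih1 ih2 => exact ⟨.par ((ih1 ρ).some) ((ih2 ρ).some)⟩
  | nu _ ih => exact ⟨.nu ((ih (sucR ρ)).some)⟩
  | rep _ ih => exact ⟨.rep ((ih ρ).some)⟩
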